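/- Let c_1, …, c_n be one-time simple coins with c_i = (P_i, μ_i), 0 < P_i < 1, rates r_i = μ_i/P_i, and let E > 0 be a penalty. Let l* be a list consisting of exactly those coins c_i with r_i < E, arranged in nondecreasing order of rate. Then for every list l of pairwise distinct coins chosen from {c_1, …, c_n} (any subset, in any order), COST(l*, E) ≤ COST(l, E). That is, an optimal strategy when the player may stop at any time is to toss exactly the coins whose rate is smaller than E, in nondecreasing order of rate. -/

import Mathlib

/-!
A list of coins whose rates are at most `E` costs at most `E`; prepending to it a coin `(P, μ)`
of rate at least `E` therefore cannot lower the cost, as `μ ≥ P E ≥ P · cost`. By induction,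
discarding every coin of rate at least `E` from a list never raises its cost. Appending
further coins of rate below `E` never raises it either, since the cost is monotone in the penalty.
Finally, among the orderings of a fixed list the cost is minimised by sorting by rate: swapping
adjacent coins `x, y` changes the cost of that pair by `μ_x P_y - μ_y P_x`.
-/

/-- Expected cost of tossing a list of simple coins `(P, μ)` in order,
paying the penalty `E` if all tosses fail. -/
noncomputable def listCost (l : List (ℝ × ℝ)) (E : ℝ) : ℝ :=
  l.foldr (fun c a => c.2 + (1 - c.1) * a) E

noncomputable def coinRate (x : ℝ × ℝ) : ℝ := x.2 / x.1

theorem listCost_cons (x : ℝ × ℝ) (l : List (ℝ × ℝ)) (E : ℝ) :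
    listCost (x :: l) E = x.2 + (1 - x.1) * listCost l E := rfl

theorem listCost_append (l m : List (ℝ × ℝ)) (E : ℝ) :
    listCost (l ++ m) E = listCost l (listCost m E) :=
  List.foldr_append

theorem listCost_cons_le_cons {x : ℝ × ℝ} (hx : x.1 ≤ 1) {l m : List (ℝ × ℝ)} {E E' : ℝ}
    (h : listCost l E ≤ listCost m E') : listCost (x :: l) E ≤ listCost (x :: m) E' := by
  simp only [listCost_cons]
  gcongr

theorem listCost_mono {l : List (ℝ × ℝ)} (hl : ∀ x ∈ l, x.1 ≤ 1) {E E' : ℝ} (h : E ≤ E') :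
    listCost l E ≤ listCost l E' := by
  induction l with
  | nil => exact h
  | cons x l ih =>
    simp only [List.forall_mem_cons] at hl
    exact listCost_cons_le_cons hl.1 (ih hl.2)

theorem listCost_le_of_coinRate_le {l : List (ℝ × ℝ)} (hP : ∀ x ∈ l, x.1 ∈ Set.Ioc 0 1) {E : ℝ}
    (hrate : ∀ x ∈ l, coinRate x ≤ E) : listCost l E ≤ E := by
  induction l with
  | nil => exact le_rfl
  | cons x l ih =>
    simp only [List.forall_mem_cons] at hP hrate
    have hμ : x.2 ≤ E * x.1 := (div_le_iff₀ hP.1.1).mp hrate.1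
    have hl := ih hP.2 hrate.2
    have hx := hP.1.2
    rw [listCost_cons]
    nlinarith

theorem listCost_append_le {l m : List (ℝ × ℝ)} (hl : ∀ x ∈ l, x.1 ≤ 1)
    (hm : ∀ x ∈ m, x.1 ∈ Set.Ioc 0 1) {E : ℝ} (hrate : ∀ x ∈ m, coinRate x ≤ E) :
    listCost (l ++ m) E ≤ listCost l E := by
  rw [listCost_append]
  exact listCost_mono hl (listCost_le_of_coinRate_le hm hrate)

theorem listCost_filter_coinRate_lt_le {l : List (ℝ × ℝ)} (hP : ∀ x ∈ l, x.1 ∈ Set.Ioc 0 1)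
    (E : ℝ) : listCost (l.filter (coinRate · < E)) E ≤ listCost l E := by
  induction l with
  | nil => exact le_rfl
  | cons x l ih =>
    simp only [List.forall_mem_cons] at hP
    have hle := ih hP.2
    by_cases hx : coinRate x < E
    · rw [List.filter_cons_of_pos (by simpa using hx)]
      exact listCost_cons_le_cons hP.1.2 hle
    · rw [List.filter_cons_of_neg (by simpa using hx)]
      have hμ : E * x.1 ≤ x.2 := (le_div_iff₀ hP.1.1).mp (not_lt.mp hx)
      have hcheap : listCost (l.filter (coinRate · < E)) E ≤ E :=
        listCost_le_of_coinRate_le (fun y hy => hP.2 y (List.mem_of_mem_filter hy))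
          (fun y hy => (decide_eq_true_iff.mp (List.mem_filter.mp hy).2).le)
      have hx1 := hP.1.2
      rw [listCost_cons]
      nlinarith [mul_le_mul_of_nonneg_left hle (sub_nonneg.mpr hx1),
        mul_le_mul_of_nonneg_left hcheap hP.1.1.le]

theorem listCost_cons_cons_le_of_coinRate_le {x y : ℝ × ℝ} (hx : 0 < x.1) (hy : 0 < y.1)
    (hxy : coinRate x ≤ coinRate y) (l : List (ℝ × ℝ)) (E : ℝ) :
    listCost (x :: y :: l) E ≤ listCost (y :: x :: l) E := by
  have key : x.2 * y.1 ≤ y.2 * x.1 := (div_le_div_iff₀ hx hy).mp hxy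
  simp only [listCost_cons]
  nlinarith

theorem listCost_cons_append_le {a : ℝ × ℝ} (ha : 0 < a.1) {u : List (ℝ × ℝ)}
    (hu : ∀ x ∈ u, x.1 ∈ Set.Ioc 0 1) (hrate : ∀ x ∈ u, coinRate a ≤ coinRate x)
    (v : List (ℝ × ℝ)) (E : ℝ) :
    listCost (a :: (u ++ v)) E ≤ listCost (u ++ a :: v) E := by
  induction u with
  | nil => exact le_rfl
  | cons x u ih =>
    simp only [List.forall_mem_cons] at hu hrate
    calc listCost (a :: x :: (u ++ v)) E
        ≤ listCost (x :: a :: (u ++ v)) E :=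
          listCost_cons_cons_le_of_coinRate_le ha hu.1.1 hrate.1 _ E
      _ ≤ listCost (x :: (u ++ a :: v)) E :=
          listCost_cons_le_cons hu.1.2 (ih hu.2 hrate.2)

theorem listCost_le_of_perm_of_sorted {l l' : List (ℝ × ℝ)} (hP : ∀ x ∈ l', x.1 ∈ Set.Ioc 0 1)
    (hl : (l.map coinRate).Pairwise (· ≤ ·)) (hperm : l.Perm l') (E : ℝ) :
    listCost l E ≤ listCost l' E := by
  induction l generalizing l' with
  | nil => rw [hperm.nil_eq]
  | cons a l ih =>
    rw [List.map_cons, List.pairwise_cons, List.forall_mem_map] at hl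
    obtain ⟨u, v, rfl⟩ := List.append_of_mem (hperm.subset List.mem_cons_self)
    have hl' : l.Perm (u ++ v) := (hperm.trans List.perm_middle).cons_inv
    have hPuv : ∀ x ∈ u ++ v, x.1 ∈ Set.Ioc 0 1 := fun x hx =>
      hP x (List.perm_middle.symm.subset (List.mem_cons_of_mem a hx))
    calc listCost (a :: l) E
        ≤ listCost (a :: (u ++ v)) E :=
          listCost_cons_le_cons (hP a (by simp)).2 (ih hPuv hl.2 hl')
      _ ≤ listCost (u ++ a :: v) E :=
          listCost_cons_append_le (hP a (by simp)).1
            (fun x hx => hPuv x (List.mem_append_left v hx))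
            (fun x hx => hl.1 x (hl'.symm.subset (List.mem_append_left v hx))) v E

theorem optimal_strategy_rates_below_penalty_sorted_general
    (n : ℕ) (c : Fin n → ℝ × ℝ)
    (hP : ∀ i, 0 < (c i).1 ∧ (c i).1 < 1)
    (E : ℝ)
    (lstar : List (Fin n))
    (hmem : ∀ i : Fin n, i ∈ lstar ↔ (c i).2 / (c i).1 < E)
    (hsorted : (lstar.map (fun i => (c i).2 / (c i).1)).Pairwise (· ≤ ·)) :
    ∀ l : List (Fin n), l.Nodup →
      listCost (lstar.map c) E ≤ listCost (l.map c) E := by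
  intro l hl
  have hPmap : ∀ m : List (Fin n), ∀ x ∈ m.map c, x.1 ∈ Set.Ioc 0 1 := by
    simp only [List.forall_mem_map]
    exact fun m i _ => Set.Ioo_subset_Ioc_self (hP i)
  set cheap := l.filter (fun i => coinRate (c i) < E)
  obtain ⟨k, hk, hklstar⟩ : cheap.Subperm lstar := (hl.filter _).subperm fun i hi =>
    (hmem i).2 (decide_eq_true_iff.mp (List.mem_filter.mp hi).2)
  obtain ⟨extra, hextra⟩ := hklstar.exists_perm_append
  calc listCost (lstar.map c) E
      ≤ listCost (cheap.map c ++ extra.map c) E := by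
        rw [← List.map_append]
        exact listCost_le_of_perm_of_sorted (hPmap _)
          (by rw [List.map_map]; exact hsorted)
          ((hextra.trans (hk.append_right extra)).map c) E
    _ ≤ listCost (cheap.map c) E :=
        listCost_append_le (fun x hx => (hPmap _ x hx).2) (hPmap extra) fun x hx => by
          obtain ⟨i, hi, rfl⟩ := List.mem_map.mp hx
          exact ((hmem i).1 (hextra.symm.subset (List.mem_append_right k hi))).le
    _ = listCost ((l.map c).filter (coinRate · < E)) E := by rw [List.filter_map]; rfl
    _ ≤ listCost (l.map c) E := listCost_filter_coinRate_lt_le (hPmap l) E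

/-- Lemma 3: when the player may stop at any time, an optimal strategy for one-time
simple coins `c_1, …, c_n` and penalty `E > 0` is to toss exactly the coins whose
rate is smaller than `E`, in nondecreasing order of rate: such a list `l*` has
cost at most that of any list of pairwise distinct coins chosen from the set. -/
theorem optimal_strategy_rates_below_penalty_sorted
    (n : ℕ) (c : Fin n → ℝ × ℝ)
    (hP : ∀ i, 0 < (c i).1 ∧ (c i).1 < 1) (hμ : ∀ i, 0 ≤ (c i).2)
    (E : ℝ) (hE : 0 < E)
    (lstar : List (Fin n))
    (hnodup : lstar.Nodup)
    (hmem : ∀ i : Fin n, i ∈ lstar ↔ (c i).2 / (c i).1 < E)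
    (hsorted : (lstar.map (fun i => (c i).2 / (c i).1)).Pairwise (· ≤ ·)) :
    ∀ l : List (Fin n), l.Nodup →
      listCost (lstar.map c) E ≤ listCost (l.map c) E :=
  optimal_strategy_rates_below_penalty_sorted_general n c hP E lstar hmem hsorted
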